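/- arXiv:2111.08843 — 2 statements merged into one kernel-verified Lean document; each statement's English description precedes it below -/
import Mathlib

section
/- For all i, j ∈ [0, N−1], the Hamming weight of the sum (over F_2) of the i-th and j-th rows of the polar transform satisfies w(g_i ⊕ g_j) = 2^{|S_i|} + 2^{|S_j|} − 2·2^{|S_i ∩ S_j|}. -/
/-!
Since the `(i, c)` entry of `G_N` is `1` exactly when `S_c ⊆ S_i`, the support of `g_i` is
`{c : S_c ⊆ S_i}`, and `c ↦ S_c` is a bijection from `[0, 2^n)` onto the subsets of `[0, n)`;
so `w(g_i) = 2^|S_i|`, and the common support of `g_i` and `g_j` is `{c : S_c ⊆ S_i ∩ S_j}`, of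
size `2^|S_i ∩ S_j|`. Over `F_2` the support of `g_i ⊕ g_j` is the symmetric difference of the
two supports, whose size is `|A| + |B| - 2|A ∩ B|`.
-/

noncomputable section
open scoped Classical
open Finset

/-- The 2×2 binary matrix [[1,0],[1,1]], as an ℕ-indexed function (zero outside range). -/
def G2 (a b : ℕ) : ZMod 2 :=
  if a = 0 ∧ b = 0 then 1
  else if a = 1 ∧ b = 0 then 1
  else if a = 1 ∧ b = 1 then 1
  else 0

/-- `G n i c` is the (i,c) entry of the n-th Kronecker power over F₂ of [[1,0],[1,1]],
for row/column indices i, c ∈ [0, 2^n − 1] (standard row-major index flattening). -/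
def G : ℕ → ℕ → ℕ → ZMod 2
  | 0 => fun i c => if i = 0 ∧ c = 0 then 1 else 0
  | n + 1 => fun i c => G2 (i / 2 ^ n) (c / 2 ^ n) * G n (i % 2 ^ n) (c % 2 ^ n)

/-- Row i of the polar transform G_N (N = 2^n), as a vector of its coordinates. -/
def g (n i : ℕ) : ℕ → ZMod 2 := fun c => G n i c

/-- S_i ⊆ [0, n−1]: the support of the binary representation of i. -/
def S (n i : ℕ) : Finset ℕ := (Finset.range n).filter fun a => i.testBit a

/-- T_i = [0, n−1] \ S_i. -/
def T (n i : ℕ) : Finset ℕ := Finset.range n \ S n i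

/-- Hamming weight of a vector whose coordinates are indexed by [0, 2^n − 1]. -/
def wt (n : ℕ) (v : ℕ → ZMod 2) : ℕ :=
  ((Finset.range (2 ^ n)).filter fun c => v c ≠ 0).card

/-- The index in [0, 2^n − 1] whose binary support is the set U ⊆ [0, n−1]. -/
def idx (U : Finset ℕ) : ℕ := ∑ a ∈ U, 2 ^ a

/-- K_i = {j ∈ [i+1, N−1] : w(g_j) ≥ w(g_i ⊕ g_j) and w(g_i ⊕ g_j) = w(g_i)}. -/
def K (n i : ℕ) : Finset ℕ :=
  (Finset.Ico (i + 1) (2 ^ n)).filter fun j =>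
    wt n (g n i + g n j) ≤ wt n (g n j) ∧ wt n (g n i + g n j) = wt n (g n i)

/-- One generating step of the partial order on [0, 2^n − 1]. -/
def poStep (n i j : ℕ) : Prop :=
  i < 2 ^ n ∧ j < 2 ^ n ∧
    (S n i ⊆ S n j ∨
      ∃ a b, a ∈ S n i ∧ b ∉ S n i ∧ a < b ∧ S n j = insert b (S n i \ {a}))

/-- The partial order ⪯: reflexive–transitive closure of the generating relation. -/
def po (n : ℕ) : ℕ → ℕ → Prop := Relation.ReflTransGen (poStep n)

/-- Partial Order Property of an information set I ⊆ [0, 2^n − 1]. -/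
def POP (n : ℕ) (I : Finset ℕ) : Prop :=
  ∀ i ∈ I, ∀ j, j < 2 ^ n → po n i j → j ∈ I

/-- The code C(I): all F₂-linear combinations (i.e. subset sums) of the rows g_i, i ∈ I. -/
def codewords (n : ℕ) (I : Finset ℕ) : Finset (ℕ → ZMod 2) :=
  I.powerset.image fun H => ∑ h ∈ H, g n h

/-- A_w(I): the number of codewords of C(I) of Hamming weight w. -/
def A (n : ℕ) (I : Finset ℕ) (w : ℕ) : ℕ :=
  ((codewords n I).filter fun v => wt n v = w).card

/-- The coset C_i(I) = {g_i ⊕ ⊕_{h∈H} g_h : H ⊆ I \ [0,i]}. -/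
def coset (n : ℕ) (I : Finset ℕ) (i : ℕ) : Finset (ℕ → ZMod 2) :=
  ((I.filter fun h => i < h).powerset).image fun H => g n i + ∑ h ∈ H, g n h

/-- A_{i,w}(I): the number of vectors of Hamming weight w in the coset C_i(I). -/
def Ai (n : ℕ) (I : Finset ℕ) (i w : ℕ) : ℕ :=
  ((coset n I i).filter fun v => wt n v = w).card

open scoped symmDiff

lemma S_subset_range (n i : ℕ) : S n i ⊆ range n := filter_subset _ _

lemma S_mod (n x : ℕ) : S n (x % 2 ^ n) = S n x := by
  ext a
  simp [S, Nat.testBit_mod_two_pow]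

lemma S_succ_subset_S_succ_iff (n c i : ℕ) :
    S (n + 1) c ⊆ S (n + 1) i ↔ (c.testBit n → i.testBit n) ∧ S n c ⊆ S n i := by
  simp only [subset_iff, S, mem_filter, mem_range]
  constructor
  · intro h
    exact ⟨fun hc => (h ⟨n.lt_succ_self, hc⟩).2,
      fun a ⟨ha, hca⟩ => ⟨ha, (h ⟨ha.trans n.lt_succ_self, hca⟩).2⟩⟩
  · rintro ⟨hn, h⟩ a ⟨ha, hca⟩
    rcases Nat.lt_succ_iff_lt_or_eq.1 ha with ha | rfl
    · exact ⟨ha.trans n.lt_succ_self, (h ⟨ha, hca⟩).2⟩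
    · exact ⟨ha, hn hca⟩

lemma Nat.testBit_iff_div_two_pow_eq_one {n x : ℕ} (hx : x < 2 ^ (n + 1)) :
    x.testBit n ↔ x / 2 ^ n = 1 := by
  have : x / 2 ^ n < 2 := Nat.div_lt_of_lt_mul (by rwa [← pow_succ])
  rw [Nat.testBit_eq_decide_div_mod_eq, decide_eq_true_iff, Nat.mod_eq_of_lt this]

lemma S_eq_toFinset_bitIndices {n c : ℕ} (hc : c < 2 ^ n) : S n c = c.bitIndices.toFinset := by
  ext a
  simp only [S, mem_filter, mem_range, List.mem_toFinset, Nat.mem_bitIndices, and_iff_right_iff_imp]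
  intro ha
  exact (Nat.pow_lt_pow_iff_right (by norm_num)).1 ((Nat.ge_two_pow_of_testBit ha).trans_lt hc)

lemma idx_S {n c : ℕ} (hc : c < 2 ^ n) : idx (S n c) = c := by
  rw [S_eq_toFinset_bitIndices hc, idx, Finset.sum_toFinset_bitIndices_two_pow]

lemma S_idx {n : ℕ} {U : Finset ℕ} (hU : U ⊆ range n) : S n (idx U) = U := by
  ext a
  rw [S, mem_filter, mem_range, ← Nat.mem_bitIndices, ← List.mem_toFinset, idx,
    Finset.toFinset_bitIndices_sum_two_pow]
  exact ⟨And.right, fun ha => ⟨mem_range.1 (hU ha), ha⟩⟩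

lemma idx_lt_two_pow {n : ℕ} {U : Finset ℕ} (hU : U ⊆ range n) : idx U < 2 ^ n :=
  Nat.geomSum_lt le_rfl fun _ ha => mem_range.1 (hU ha)

lemma card_filter_S_subset {n : ℕ} {U : Finset ℕ} (hU : U ⊆ range n) :
    #((range (2 ^ n)).filter fun c => S n c ⊆ U) = 2 ^ #U := by
  rw [← card_powerset]
  refine card_nbij' (S n) idx (fun c hc => ?_) (fun V hV => ?_) (fun c hc => ?_) (fun V hV => ?_)
  · exact mem_powerset.2 (mem_filter.1 hc).2
  · have hV' := (mem_powerset.1 hV).trans hU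
    rw [mem_coe, mem_filter, mem_range, S_idx hV']
    exact ⟨idx_lt_two_pow hV', mem_powerset.1 hV⟩
  · exact idx_S (mem_range.1 (mem_filter.1 hc).1)
  · exact S_idx ((mem_powerset.1 hV).trans hU)

lemma G2_eq_ite {a b : ℕ} (ha : a < 2) (hb : b < 2) :
    G2 a b = if b = 1 → a = 1 then 1 else 0 := by
  interval_cases a <;> interval_cases b <;> simp [G2]

lemma G_eq_ite {n i c : ℕ} (hi : i < 2 ^ n) (hc : c < 2 ^ n) :
    G n i c = if S n c ⊆ S n i then 1 else 0 := by
  induction n generalizing i c with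
  | zero => simp_all [G, S]
  | succ n ih =>
    have hdiv {x : ℕ} (hx : x < 2 ^ (n + 1)) : x / 2 ^ n < 2 :=
      Nat.div_lt_of_lt_mul (by rwa [← pow_succ])
    have hmod (x : ℕ) : x % 2 ^ n < 2 ^ n := Nat.mod_lt _ (by positivity)
    simp only [G]
    rw [ih (hmod i) (hmod c), S_mod, S_mod, G2_eq_ite (hdiv hi) (hdiv hc), ite_zero_mul_ite_zero,
      one_mul]
    simp only [S_succ_subset_S_succ_iff, Nat.testBit_iff_div_two_pow_eq_one hi,
      Nat.testBit_iff_div_two_pow_eq_one hc]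

def hammingSupport (n : ℕ) (v : ℕ → ZMod 2) : Finset ℕ :=
  (range (2 ^ n)).filter fun c => v c ≠ 0

lemma wt_eq_card_hammingSupport (n : ℕ) (v : ℕ → ZMod 2) : wt n v = #(hammingSupport n v) := rfl

lemma Finset.card_symmDiff_add_two_mul_card_inter {α : Type*} [DecidableEq α] (s t : Finset α) :
    #(s ∆ t) + 2 * #(s ∩ t) = #s + #t := by
  rw [symmDiff_eq_sup_sdiff_inf, sup_eq_union, inf_eq_inter,
    card_sdiff_of_subset (inter_subset_left.trans subset_union_left), ← card_union_add_card_inter]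
  have : #(s ∩ t) ≤ #(s ∪ t) := card_le_card inter_subset_union
  omega

lemma ZMod.add_ne_zero_iff_xor (a b : ZMod 2) : a + b ≠ 0 ↔ Xor (a ≠ 0) (b ≠ 0) := by
  revert a b
  decide

lemma hammingSupport_add (n : ℕ) (v w : ℕ → ZMod 2) :
    hammingSupport n (v + w) = hammingSupport n v ∆ hammingSupport n w := by
  ext c
  simp only [hammingSupport, mem_symmDiff, mem_filter, Pi.add_apply, ZMod.add_ne_zero_iff_xor, Xor]
  tauto

lemma wt_add_add_two_mul_card_inter (n : ℕ) (v w : ℕ → ZMod 2) :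
    wt n (v + w) + 2 * #(hammingSupport n v ∩ hammingSupport n w) = wt n v + wt n w := by
  simp only [wt_eq_card_hammingSupport, hammingSupport_add, card_symmDiff_add_two_mul_card_inter]

lemma hammingSupport_g {n k : ℕ} (hk : k < 2 ^ n) :
    hammingSupport n (g n k) = (range (2 ^ n)).filter fun c => S n c ⊆ S n k := by
  refine filter_congr fun c hc => ?_
  rw [g, G_eq_ite hk (mem_range.1 hc)]
  split_ifs with h <;> simp [h]

lemma wt_g {n k : ℕ} (hk : k < 2 ^ n) : wt n (g n k) = 2 ^ #(S n k) := by
  rw [wt_eq_card_hammingSupport, hammingSupport_g hk, card_filter_S_subset (S_subset_range n k)]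

lemma card_hammingSupport_g_inter {n i j : ℕ} (hi : i < 2 ^ n) (hj : j < 2 ^ n) :
    #(hammingSupport n (g n i) ∩ hammingSupport n (g n j)) = 2 ^ #(S n i ∩ S n j) := by
  simp only [hammingSupport_g hi, hammingSupport_g hj, ← filter_and, ← subset_inter_iff]
  exact card_filter_S_subset (inter_subset_left.trans (S_subset_range n i))

theorem two_rows_weight_general (n : ℕ) (i j : ℕ) (hi : i < 2 ^ n) (hj : j < 2 ^ n) :
    wt n (g n i + g n j) =
      2 ^ (S n i).card + 2 ^ (S n j).card - 2 * 2 ^ (S n i ∩ S n j).card := by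
  have h := wt_add_add_two_mul_card_inter n (g n i) (g n j)
  rw [wt_g hi, wt_g hj, card_hammingSupport_g_inter hi hj] at h
  omega

/-- w(g_i ⊕ g_j) = 2^{|S_i|} + 2^{|S_j|} − 2·2^{|S_i ∩ S_j|}. -/
theorem two_rows_weight (n : ℕ) (hn : 1 ≤ n) (i j : ℕ) (hi : i < 2 ^ n) (hj : j < 2 ^ n) :
    wt n (g n i + g n j) =
      2 ^ (S n i).card + 2 ^ (S n j).card - 2 * 2 ^ (S n i ∩ S n j).card :=
  two_rows_weight_general n i j hi hj
end
end

section
/- For every nonempty set I ⊆ [0, N−1], the minimum Hamming weight over all nonzero codewords of the linear code C(I) spanned by the rows {g_i : i ∈ I} equals min_{i∈I} w(g_i) = min_{i∈I} 2^{|S_i|}; in particular, the minimum distance of any polar code C(I) equals min_{i∈I} w(g_i). -/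
noncomputable section
open scoped Classical
open Finset

/-!
Split indices and coordinates at `2 ^ n`: `G_{2N} = [[G_N, 0], [G_N, G_N]]`, so the sum of the rows
indexed by `H₀ ∪ (H₁ + 2 ^ n)` is `(u + w | w)`, where `u + w` is the sum of the rows indexed by
`H₀ ∆ H₁` and `w` that of `H₁` (Plotkin's construction). By induction on `n`, the weight of a
nonzero sum of rows is at least the weight of one of the rows: when both halves are bounded by
rows of `H₁`, the lighter of those, moved to the upper half, has twice its weight.
-/
lemma Finset.sum_add_sum_eq_sum_symmDiff {ι M : Type*} [DecidableEq ι] [AddCommGroup M]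
    [Module (ZMod 2) M] (A B : Finset ι) (f : ι → M) :
    ∑ i ∈ A, f i + ∑ i ∈ B, f i = ∑ i ∈ symmDiff A B, f i := by
  rw [← sum_union_inter, ← sum_sdiff (inter_subset_union : A ∩ B ⊆ A ∪ B), add_assoc,
    ZModModule.add_self, add_zero, symmDiff_eq_sup_sdiff_inf]
  rfl

lemma g_succ {n i c : ℕ} (hi : i < 2 ^ n) (hc : c < 2 ^ n) (a b : ℕ) :
    g (n + 1) (2 ^ n * a + i) (2 ^ n * b + c) = G2 a b * g n i c := by
  simp [g, G, Nat.mul_add_div (Nat.two_pow_pos n), Nat.div_eq_of_lt, Nat.mod_eq_of_lt, hi, hc]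

lemma g_succ_low_low {n i c : ℕ} (hi : i < 2 ^ n) (hc : c < 2 ^ n) :
    g (n + 1) i c = g n i c := by
  simpa [G2] using g_succ hi hc 0 0

lemma g_succ_low_high {n i c : ℕ} (hi : i < 2 ^ n) (hc : c < 2 ^ n) :
    g (n + 1) i (c + 2 ^ n) = 0 := by
  simpa [G2, add_comm] using g_succ hi hc 0 1

lemma g_succ_high_low {n i c : ℕ} (hi : i < 2 ^ n) (hc : c < 2 ^ n) :
    g (n + 1) (i + 2 ^ n) c = g n i c := by
  simpa [G2, add_comm] using g_succ hi hc 1 0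

lemma g_succ_high_high {n i c : ℕ} (hi : i < 2 ^ n) (hc : c < 2 ^ n) :
    g (n + 1) (i + 2 ^ n) (c + 2 ^ n) = g n i c := by
  simpa [G2, add_comm] using g_succ hi hc 1 1

lemma wt_succ (n : ℕ) (v : ℕ → ZMod 2) :
    wt (n + 1) v = wt n v + wt n (fun c => v (c + 2 ^ n)) := by
  rw [wt, wt, wt, pow_succ, mul_two, range_add, filter_union,
    card_union_of_disjoint (disjoint_filter_filter (disjoint_range_addLeftEmbedding _ _)),
    filter_map, card_map]
  simp [add_comm]

lemma wt_congr {n : ℕ} {v w : ℕ → ZMod 2} (h : ∀ c < 2 ^ n, v c = w c) :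
    wt n v = wt n w := by
  unfold wt
  congr 1
  exact filter_congr fun c hc => by rw [h c (mem_range.mp hc)]

@[simp]
lemma wt_zero (n : ℕ) : wt n 0 = 0 := by simp [wt]

lemma wt_g_succ_low {n i : ℕ} (hi : i < 2 ^ n) : wt (n + 1) (g (n + 1) i) = wt n (g n i) := by
  rw [wt_succ, wt_congr (w := 0) fun c hc => g_succ_low_high hi hc, wt_zero, add_zero]
  exact wt_congr fun c hc => g_succ_low_low hi hc

lemma wt_g_succ_high {n i : ℕ} (hi : i < 2 ^ n) :
    wt (n + 1) (g (n + 1) (i + 2 ^ n)) = 2 * wt n (g n i) := by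
  rw [wt_succ, two_mul, wt_congr fun c hc => g_succ_high_low hi hc]
  exact congrArg _ (wt_congr fun c hc => g_succ_high_high hi hc)

lemma exists_eq_union_map_addRight {n : ℕ} {H : Finset ℕ}
    (hH : ∀ h ∈ H, h < 2 ^ (n + 1)) :
    ∃ H₀ H₁ : Finset ℕ, (∀ h ∈ H₀, h < 2 ^ n) ∧ (∀ h ∈ H₁, h < 2 ^ n) ∧
      H = H₀ ∪ H₁.map (addRightEmbedding (2 ^ n)) := by
  refine ⟨H.filter (· < 2 ^ n), (H.filter (2 ^ n ≤ ·)).image (· - 2 ^ n), by simp +contextual,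
    ?_, ?_⟩
  · simp only [mem_image, mem_filter]
    rintro _ ⟨h, ⟨hmem, -⟩, rfl⟩
    have := hH h hmem
    omega
  · ext h
    simp only [mem_union, mem_filter, mem_map, mem_image, addRightEmbedding_apply]
    constructor
    · intro hmem
      by_cases hlt : h < 2 ^ n
      · exact .inl ⟨hmem, hlt⟩
      · exact .inr ⟨h - 2 ^ n, ⟨h, ⟨hmem, by omega⟩, rfl⟩, by omega⟩
    · rintro (⟨hmem, -⟩ | ⟨_, ⟨h, ⟨hmem, hle⟩, rfl⟩, rfl⟩)
      · exact hmem
      · rwa [Nat.sub_add_cancel hle]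

lemma wt_sum_g_succ {n : ℕ} {H₀ H₁ : Finset ℕ} (h₀ : ∀ h ∈ H₀, h < 2 ^ n)
    (h₁ : ∀ h ∈ H₁, h < 2 ^ n) :
    wt (n + 1) (∑ h ∈ H₀ ∪ H₁.map (addRightEmbedding (2 ^ n)), g (n + 1) h) =
      wt n (∑ h ∈ symmDiff H₀ H₁, g n h) + wt n (∑ h ∈ H₁, g n h) := by
  have hdisj : Disjoint H₀ (H₁.map (addRightEmbedding (2 ^ n))) := by
    simp only [disjoint_left, mem_map, addRightEmbedding_apply, not_exists, not_and]
    intro h hh₀ k _ hk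
    have := h₀ h hh₀
    omega
  rw [sum_union hdisj, sum_map, wt_succ, ← sum_add_sum_eq_sum_symmDiff]
  congr 1 <;> refine wt_congr fun c hc => ?_
  · simp only [Pi.add_apply, Finset.sum_apply, addRightEmbedding_apply]
    rw [sum_congr rfl fun h hh => g_succ_low_low (h₀ h hh) hc,
      sum_congr rfl fun h hh => g_succ_high_low (h₁ h hh) hc]
  · simp only [Pi.add_apply, Finset.sum_apply, addRightEmbedding_apply]
    rw [sum_congr rfl fun h hh => g_succ_low_high (h₀ h hh) hc,
      sum_congr rfl fun h hh => g_succ_high_high (h₁ h hh) hc, sum_const_zero, zero_add]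

lemma exists_wt_g_le_wt_sum (n : ℕ) {H : Finset ℕ} (hH : ∀ h ∈ H, h < 2 ^ n)
    (hne : H.Nonempty) : ∃ h ∈ H, wt n (g n h) ≤ wt n (∑ h ∈ H, g n h) := by
  induction n generalizing H with
  | zero =>
    obtain ⟨h, hh⟩ := hne
    have hH' : H = {h} := eq_singleton_iff_unique_mem.mpr
      ⟨hh, fun k hk => by have := hH k hk; have := hH h hh; omega⟩
    exact ⟨h, hh, by rw [hH', sum_singleton]⟩
  | succ n ih =>
    obtain ⟨H₀, H₁, h₀, h₁, rfl⟩ := exists_eq_union_map_addRight hH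
    rw [wt_sum_g_succ h₀ h₁]
    have low_mem : ∀ k ∈ H₀, k ∈ H₀ ∪ H₁.map (addRightEmbedding (2 ^ n)) :=
      fun k hk => mem_union_left _ hk
    have high_mem : ∀ k ∈ H₁, k + 2 ^ n ∈ H₀ ∪ H₁.map (addRightEmbedding (2 ^ n)) :=
      fun k hk => mem_union_right _ (mem_map_of_mem _ hk)
    rcases H₁.eq_empty_or_nonempty with rfl | hne₁
    · obtain ⟨h, hh, hle⟩ := ih h₀ (by simpa using hne)
      refine ⟨h, low_mem h hh, ?_⟩
      rw [show symmDiff H₀ ∅ = H₀ from symmDiff_bot H₀]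
      simpa [wt_g_succ_low (h₀ h hh)] using hle
    obtain ⟨j, hj, hjw⟩ := ih h₁ hne₁
    rcases (symmDiff H₀ H₁).eq_empty_or_nonempty with hΔ | hneΔ
    · have hj₀ : j ∈ H₀ := (symmDiff_eq_bot.mp hΔ) ▸ hj
      refine ⟨j, low_mem j hj₀, ?_⟩
      rw [wt_g_succ_low (h₀ j hj₀), hΔ, sum_empty, wt_zero]
      omega
    have hΔ : ∀ h ∈ symmDiff H₀ H₁, h < 2 ^ n := fun h hh =>
      (mem_symmDiff.mp hh).elim (fun hh => h₀ h hh.1) (fun hh => h₁ h hh.1)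
    obtain ⟨d, hd, hdw⟩ := ih hΔ hneΔ
    rcases mem_symmDiff.mp hd with ⟨hd₀, -⟩ | ⟨hd₁, -⟩
    · refine ⟨d, low_mem d hd₀, ?_⟩
      rw [wt_g_succ_low (h₀ d hd₀)]
      omega
    -- `d` and `j` both lie in `H₁`; the lighter one, moved to the upper half, has double weight
    obtain ⟨k, hk, hkd, hkj⟩ : ∃ k ∈ H₁, wt n (g n k) ≤ wt n (g n d) ∧
        wt n (g n k) ≤ wt n (g n j) := by
      rcases le_total (wt n (g n d)) (wt n (g n j)) with hle | hle
      exacts [⟨d, hd₁, le_rfl, hle⟩, ⟨j, hj, hle, le_rfl⟩]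
    refine ⟨k + 2 ^ n, high_mem k hk, ?_⟩
    rw [wt_g_succ_high (h₁ k hk)]
    omega

lemma S_succ_of_lt {n i : ℕ} (hi : i < 2 ^ n) : S (n + 1) i = S n i := by
  rw [S, S, range_add_one, filter_insert, if_neg (by simp [Nat.testBit_eq_false_of_lt hi])]

lemma S_succ_add_two_pow {n i : ℕ} (hi : i < 2 ^ n) :
    S (n + 1) (i + 2 ^ n) = insert n (S n i) := by
  rw [S, S, range_add_one, filter_insert, add_comm,
    if_pos (by simp [Nat.testBit_two_pow_add_eq, Nat.testBit_eq_false_of_lt hi])]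
  exact congrArg _ (filter_congr fun a ha => by rw [Nat.testBit_two_pow_add_gt (mem_range.mp ha)])

lemma wt_g_eq_two_pow_card (n : ℕ) {i : ℕ} (hi : i < 2 ^ n) : wt n (g n i) = 2 ^ #(S n i) := by
  induction n generalizing i with
  | zero =>
    obtain rfl : i = 0 := by simpa using hi
    decide
  | succ n ih =>
    rcases lt_or_ge i (2 ^ n) with hlt | hge
    · rw [wt_g_succ_low hlt, S_succ_of_lt hlt, ih hlt]
    · obtain ⟨r, rfl⟩ := Nat.exists_eq_add_of_le' hge
      have hr : r < 2 ^ n := by rw [pow_succ] at hi; omega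
      rw [wt_g_succ_high hr, S_succ_add_two_pow hr, card_insert_of_notMem (by simp [S]), ih hr,
        pow_succ, mul_comm]

lemma g_ne_zero (n : ℕ) {i : ℕ} (hi : i < 2 ^ n) : g n i ≠ 0 := fun h0 =>
  (Nat.two_pow_pos _).ne (by rw [← wt_g_eq_two_pow_card n hi, h0, wt_zero])

theorem min_distance_general (n : ℕ) (I : Finset ℕ) (hI : I.Nonempty)
    (hIr : ∀ i ∈ I, i < 2 ^ n) :
    (∀ v ∈ codewords n I, v ≠ 0 → (I.inf' hI fun i => wt n (g n i)) ≤ wt n v) ∧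
    (∃ v ∈ codewords n I, v ≠ 0 ∧ wt n v = I.inf' hI fun i => wt n (g n i)) ∧
    (I.inf' hI fun i => wt n (g n i)) = (I.inf' hI fun i => 2 ^ (S n i).card) := by
  refine ⟨?_, ?_, inf'_congr hI rfl fun i hi => wt_g_eq_two_pow_card n (hIr i hi)⟩
  · intro v hv hv0
    obtain ⟨H, hHI, rfl⟩ := mem_image.mp hv
    rw [mem_powerset] at hHI
    have hne : H.Nonempty := nonempty_iff_ne_empty.mpr (by rintro rfl; exact hv0 sum_empty)
    obtain ⟨h, hh, hle⟩ := exists_wt_g_le_wt_sum n (fun h hh => hIr h (hHI hh)) hne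
    exact (inf'_le _ (hHI hh)).trans hle
  · obtain ⟨i, hi, hmin⟩ := exists_mem_eq_inf' hI fun i => wt n (g n i)
    exact ⟨g n i, mem_image.mpr ⟨{i}, by simpa using hi, sum_singleton _ _⟩,
      g_ne_zero n (hIr i hi), hmin.symm⟩

/-- the minimum weight over nonzero codewords of C(I) equals
min_{i∈I} w(g_i) = min_{i∈I} 2^{|S_i|}. -/
theorem min_distance (n : ℕ) (hn : 1 ≤ n) (I : Finset ℕ) (hI : I.Nonempty)
    (hIr : ∀ i ∈ I, i < 2 ^ n) :
    (∀ v ∈ codewords n I, v ≠ 0 → (I.inf' hI fun i => wt n (g n i)) ≤ wt n v) ∧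
    (∃ v ∈ codewords n I, v ≠ 0 ∧ wt n v = I.inf' hI fun i => wt n (g n i)) ∧
    (I.inf' hI fun i => wt n (g n i)) = (I.inf' hI fun i => 2 ^ (S n i).card) :=
  min_distance_general n I hI hIr
end
end
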